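/- arXiv:1202.5484 — 6 statements merged into one kernel-verified Lean document; each statement's English description precedes it below -/
import Mathlib

section
/- Let G = ℤ^r for some r ∈ ℕ, let S ⊆ G be a symmetric finite generating set, and let s ∈ S \ {0} be an element of S of maximal Euclidean (ℓ²) norm. Then for every h ∈ G the algebraic line n ↦ h + n·s of type s is a convex geodesic line in Cay(G,S). -/
/-- The Cayley graph of an (additive) group `G` with respect to a subset `S`:
vertices are elements of `G`, and `g`, `h` are adjacent iff `h - g ∈ (S ∪ -S) \ {0}`. -/
def cayley {G : Type*} [AddCommGroup G] (S : Set G) : SimpleGraph G where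
  Adj g h := g ≠ h ∧ (h - g ∈ S ∨ g - h ∈ S)
  symm := ⟨fun _ _ hadj => ⟨hadj.1.symm, hadj.2.symm⟩⟩
  loopless := ⟨fun _ hadj => hadj.1 rfl⟩

/-- `p 0, p 1, …, p n` is a geodesic segment in `Γ`: a path whose length realizes
the distance between its endpoints. -/
def IsGeodesicSegment {V : Type*} (Γ : SimpleGraph V) (n : ℕ) (p : ℕ → V) : Prop :=
  (∀ i < n, Γ.Adj (p i) (p (i + 1))) ∧ Γ.dist (p 0) (p n) = n

/-- A geodesic line in `Γ`. -/
def IsGeodesicLine {V : Type*} (Γ : SimpleGraph V) (γ : ℤ → V) : Prop :=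
  ∀ j k : ℤ, Γ.dist (γ j) (γ k) = (j - k).natAbs

/-- A convex geodesic line: a geodesic line such that for all `n ≤ m` the only geodesic
segment from `γ n` to `γ m` is `(γ n, γ (n+1), …, γ m)`. -/
def IsConvexGeodesicLine {V : Type*} (Γ : SimpleGraph V) (γ : ℤ → V) : Prop :=
  IsGeodesicLine Γ γ ∧
    ∀ n m : ℤ, n ≤ m → ∀ (k : ℕ) (p : ℕ → V),
      IsGeodesicSegment Γ k p → p 0 = γ n → p k = γ m →
        ∀ j ≤ k, p j = γ (n + j)

/-- A quasi-convex geodesic line: a geodesic line such that geodesic segments joining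
points `c`-close to the line stay uniformly `C`-close to it (fellow-traveller style). -/
def IsQuasiConvexGeodesicLine {V : Type*} (Γ : SimpleGraph V) (γ : ℤ → V) : Prop :=
  IsGeodesicLine Γ γ ∧
    ∀ c : ℕ, ∃ C : ℕ, ∀ n m : ℤ, n ≤ m → ∀ x y : V,
      Γ.dist x (γ n) ≤ c → Γ.dist y (γ m) ≤ c →
        ∀ p : ℕ → V, IsGeodesicSegment Γ (Γ.dist x y) p →
          p 0 = x → p (Γ.dist x y) = y →
            ∀ j ≤ Γ.dist x y, Γ.dist (p j) (γ (n + j)) ≤ C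

/-- A quasi-algebraic line of quasi-type `t ∈ G/tors G` in `Cay(G,S)`: a ℤ-path in the
Cayley graph all of whose steps project to `t` in `G/tors G`. -/
def IsQuasiAlgebraicLine {G : Type*} [AddCommGroup G] (S : Set G)
    (t : G ⧸ AddCommGroup.torsion G) (γ : ℤ → G) : Prop :=
  (∀ n : ℤ, (cayley S).Adj (γ n) (γ (n + 1))) ∧
    ∀ n : ℤ, QuotientAddGroup.mk' (AddCommGroup.torsion G) (γ (n + 1) - γ n) = t

/-! Use the height function `φ = ⟨·, s⟩`. Since `‖t‖ ≤ ‖s‖` for every `t ∈ S`, expanding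
`‖t - s‖² ≥ 0` gives `φ t ≤ ‖s‖²` with equality only for `t = s`. Hence `φ` grows by at most
`‖s‖²` along each edge of the Cayley graph, so `h + m • s` is at distance at least `m - n` from
`h + n • s`, and a path of exactly `m - n` edges between them must step by `s` every time. -/

open SimpleGraph

section CayleyHeight

variable {G : Type*} [AddCommGroup G] {S : Set G} {s : G}

lemma cayley_sub_mem_of_adj (hsym : ∀ t ∈ S, -t ∈ S) {a b : G} (hab : (cayley S).Adj a b) :
    b - a ∈ S := by
  rcases hab.2 with h | h
  · exact h
  · simpa using hsym _ h

lemma cayley_adj_add_self (hs : s ∈ S) (hs0 : s ≠ 0) (a : G) : (cayley S).Adj a (a + s) :=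
  ⟨fun h => hs0 (by simpa using h.symm), .inl (by simpa using hs)⟩

lemma cayley_exists_walk_add_nsmul (hs : s ∈ S) (hs0 : s ≠ 0) (a : G) (m : ℕ) :
    ∃ w : (cayley S).Walk a (a + m • s), w.length = m := by
  induction m generalizing a with
  | zero => exact ⟨Walk.nil.copy rfl (by simp), by simp⟩
  | succ m ih =>
    obtain ⟨w, hw⟩ := ih (a + s)
    exact ⟨(Walk.cons (cayley_adj_add_self hs hs0 a) w).copy rfl (by rw [succ_nsmul', add_assoc]),
      by simp [hw]⟩

variable {φ : G →+ ℤ}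

lemma cayley_walk_map_sub_le (hsym : ∀ t ∈ S, -t ∈ S) {c : ℤ} (hφ : ∀ t ∈ S, φ t ≤ c)
    {a b : G} (w : (cayley S).Walk a b) : φ (b - a) ≤ w.length * c := by
  induction w with
  | nil => simp
  | @cons a b d hab w ih =>
    have hstep := hφ _ (cayley_sub_mem_of_adj hsym hab)
    have hsplit : d - a = (b - a) + (d - b) := by abel
    rw [hsplit, map_add, Walk.length_cons]
    push_cast
    linarith

lemma cayley_dist_add_nsmul (hsym : ∀ t ∈ S, -t ∈ S) (hs : s ∈ S) (hφs : 0 < φ s)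
    (hφ : ∀ t ∈ S, φ t ≤ φ s) (a : G) (m : ℕ) : (cayley S).dist a (a + m • s) = m := by
  have hs0 : s ≠ 0 := fun h => by simp [h] at hφs
  obtain ⟨w, hw⟩ := cayley_exists_walk_add_nsmul hs hs0 a m
  refine le_antisymm ((dist_le w).trans hw.le) ?_
  obtain ⟨w', hw'⟩ := w.reachable.exists_walk_length_eq_dist
  have hbound := cayley_walk_map_sub_le hsym hφ w'
  rw [add_sub_cancel_left, map_nsmul, nsmul_eq_mul, hw'] at hbound
  exact_mod_cast le_of_mul_le_mul_right hbound hφs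

lemma cayley_isGeodesicLine (hsym : ∀ t ∈ S, -t ∈ S) (hs : s ∈ S) (hφs : 0 < φ s)
    (hφ : ∀ t ∈ S, φ t ≤ φ s) (h : G) :
    IsGeodesicLine (cayley S) (fun n : ℤ => h + n • s) := by
  suffices hle : ∀ j k : ℤ, k ≤ j →
      (cayley S).dist (h + k • s) (h + j • s) = (j - k).natAbs by
    intro j k
    rcases le_total k j with hkj | hjk
    · rw [dist_comm, hle j k hkj]
    · rw [hle k j hjk, ← Int.natAbs_neg, neg_sub]
  intro j k hkj
  have hj : h + j • s = (h + k • s) + (j - k).natAbs • s := by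
    rw [← natCast_zsmul, Int.natAbs_of_nonneg (sub_nonneg.mpr hkj), sub_zsmul]
    abel
  rw [hj, cayley_dist_add_nsmul hsym hs hφs hφ]

lemma map_le_of_forall_ne_lt (hmax : ∀ t ∈ S, t ≠ s → φ t < φ s) {t : G} (ht : t ∈ S) :
    φ t ≤ φ s := by
  rcases eq_or_ne t s with rfl | hne
  · exact le_rfl
  · exact (hmax t ht hne).le

lemma forall_sub_eq_of_sub_eq_nsmul (hmax : ∀ t ∈ S, t ≠ s → φ t < φ s) {p : ℕ → G} {k : ℕ}
    (hstep : ∀ i < k, p (i + 1) - p i ∈ S) (hend : p k - p 0 = k • s) :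
    ∀ i < k, p (i + 1) - p i = s := by
  have hle : ∀ i ∈ Finset.range k, φ (p (i + 1) - p i) ≤ φ s := fun i hi =>
    map_le_of_forall_ne_lt hmax (hstep i (Finset.mem_range.mp hi))
  have hsum : ∑ i ∈ Finset.range k, φ (p (i + 1) - p i) = ∑ i ∈ Finset.range k, φ s := by
    rw [← map_sum, Finset.sum_range_sub, hend, map_nsmul, Finset.sum_const, Finset.card_range]
  intro i hi
  by_contra hne
  exact (hmax _ (hstep i hi) hne).ne
    ((Finset.sum_eq_sum_iff_of_le hle).mp hsum i (Finset.mem_range.mpr hi))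

lemma eq_add_nsmul_of_sub_eq {p : ℕ → G} {k : ℕ} (hstep : ∀ i < k, p (i + 1) - p i = s) :
    ∀ j ≤ k, p j = p 0 + j • s := by
  intro j hj
  induction j with
  | zero => simp
  | succ j ih =>
    rw [succ_nsmul, ← add_assoc, ← ih (by omega), ← hstep j (by omega), add_sub_cancel]

theorem cayley_isConvexGeodesicLine (hsym : ∀ t ∈ S, -t ∈ S) (hs : s ∈ S) (hφs : 0 < φ s)
    (hmax : ∀ t ∈ S, t ≠ s → φ t < φ s) (h : G) :
    IsConvexGeodesicLine (cayley S) (fun n : ℤ => h + n • s) := by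
  have hline := cayley_isGeodesicLine hsym hs hφs (fun _ => map_le_of_forall_ne_lt hmax) h
  refine ⟨hline, fun n m hnm k p ⟨hadj, hdist⟩ hp0 hpk j hj => ?_⟩
  have hk : (k : ℤ) = m - n := by
    have := hline m n
    rw [← hp0, ← hpk, dist_comm, hdist] at this
    omega
  have hend : p k - p 0 = k • s := by
    rw [hp0, hpk, add_sub_add_left_eq_sub, ← natCast_zsmul, hk, sub_zsmul, sub_eq_add_neg]
  have hsteps := forall_sub_eq_of_sub_eq_nsmul hmax
    (fun i hi => cayley_sub_mem_of_adj hsym (hadj i hi)) hend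
  rw [eq_add_nsmul_of_sub_eq hsteps j hj, hp0]
  show h + n • s + j • s = h + (n + j) • s
  rw [add_zsmul, natCast_zsmul, add_assoc]

end CayleyHeight

section DotProduct

variable {ι R : Type*} [Fintype ι] [CommRing R] [LinearOrder R] [IsStrictOrderedRing R]

lemma dotProduct_self_pos {v : ι → R} (hv : v ≠ 0) : 0 < v ⬝ᵥ v :=
  lt_of_le_of_ne (Finset.sum_nonneg fun _ _ => mul_self_nonneg _)
    (Ne.symm (dotProduct_self_eq_zero.not.mpr hv))

lemma dotProduct_lt_dotProduct_self {t s : ι → R} (h : t ⬝ᵥ t ≤ s ⬝ᵥ s) (hne : t ≠ s) :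
    t ⬝ᵥ s < s ⬝ᵥ s := by
  have hpos := dotProduct_self_pos (sub_ne_zero.mpr hne)
  rw [sub_dotProduct, dotProduct_sub, dotProduct_sub, dotProduct_comm s t] at hpos
  linarith

end DotProduct

theorem algebraic_line_convex_general {r : ℕ} (S : Set (Fin r → ℤ))
    (hsym : ∀ t ∈ S, -t ∈ S)
    (s : Fin r → ℤ) (hs : s ∈ S) (hs0 : s ≠ 0)
    (hmax : ∀ t ∈ S, ∑ i, (t i) ^ 2 ≤ ∑ i, (s i) ^ 2)
    (h : Fin r → ℤ) :
    IsConvexGeodesicLine (cayley S) (fun n : ℤ => h + n • s) := by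
  have hnorm : ∀ t : Fin r → ℤ, ∑ i, (t i) ^ 2 = t ⬝ᵥ t := fun t => by
    simp only [dotProduct, sq]
  let φ : (Fin r → ℤ) →+ ℤ := AddMonoidHom.mk' (· ⬝ᵥ s) (add_dotProduct · · s)
  refine cayley_isConvexGeodesicLine (φ := φ) hsym hs ?_ (fun t ht hne => ?_) h
  · exact dotProduct_self_pos hs0
  · exact dotProduct_lt_dotProduct_self (by simpa only [hnorm] using hmax t ht) hne

/-- In `ℤ^r` with a symmetric finite generating set `S`, if `s ∈ S \ {0}` has maximal
Euclidean (ℓ²) norm among elements of `S`, then for every `h` the algebraic line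
`n ↦ h + n • s` of type `s` is a convex geodesic line in `Cay(ℤ^r, S)`. -/
theorem algebraic_line_convex {r : ℕ} (S : Set (Fin r → ℤ)) (hfin : S.Finite)
    (hsym : ∀ t ∈ S, -t ∈ S) (hgen : AddSubgroup.closure S = ⊤)
    (s : Fin r → ℤ) (hs : s ∈ S) (hs0 : s ≠ 0)
    (hmax : ∀ t ∈ S, ∑ i, (t i) ^ 2 ≤ ∑ i, (s i) ^ 2)
    (h : Fin r → ℤ) :
    IsConvexGeodesicLine (cayley S) (fun n : ℤ => h + n • s) :=
  algebraic_line_convex_general S hsym s hs hs0 hmax h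
end

section
/- Let G be an Abelian group and let S ⊆ G be a finite symmetric generating set. Then every convex geodesic line in Cay(G,S) is algebraic, i.e., of the form n ↦ h + n·s for some h ∈ G and s ∈ S. -/
/-! Two consecutive steps `a, b` of a line in an Abelian Cayley graph can be swapped:
`γ n, γ n + b, γ (n + 2)` is again a path, and a geodesic one. Convexity forces it to be the
line itself, so `b = a`; hence all steps are equal to one `s`, and `s ∈ S` by symmetry. -/

namespace IsGeodesicLine

variable {V : Type*} {Γ : SimpleGraph V} {γ : ℤ → V}

theorem adj_succ (hγ : IsGeodesicLine Γ γ) (n : ℤ) : Γ.Adj (γ n) (γ (n + 1)) :=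
  SimpleGraph.dist_eq_one_iff_adj.mp (by rw [hγ]; simp)

theorem dist_add_two (hγ : IsGeodesicLine Γ γ) (n : ℤ) : Γ.dist (γ n) (γ (n + 2)) = 2 := by
  rw [hγ]; omega

end IsGeodesicLine

theorem isGeodesicSegment_two {V : Type*} {Γ : SimpleGraph V} {x y z : V}
    (hxy : Γ.Adj x y) (hyz : Γ.Adj y z) (hxz : Γ.dist x z = 2) :
    IsGeodesicSegment Γ 2 (fun i => if i = 0 then x else if i = 1 then y else z) := by
  refine ⟨fun i hi => ?_, hxz⟩
  interval_cases i <;> simpa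

theorem IsConvexGeodesicLine.eq_of_adj_of_adj {V : Type*} {Γ : SimpleGraph V} {γ : ℤ → V}
    (hγ : IsConvexGeodesicLine Γ γ) {n : ℤ} {y : V}
    (h₁ : Γ.Adj (γ n) y) (h₂ : Γ.Adj y (γ (n + 2))) : y = γ (n + 1) := by
  have := hγ.2 n (n + 2) (by omega) 2 _ (isGeodesicSegment_two h₁ h₂ (hγ.1.dist_add_two n))
    rfl rfl 1 (by norm_num)
  simpa using this

section Cayley

variable {G : Type*} [AddCommGroup G] {S : Set G}

theorem cayley_adj_iff {g h : G} :
    (cayley S).Adj g h ↔ h - g ≠ 0 ∧ (h - g ∈ S ∨ -(h - g) ∈ S) := by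
  simp [cayley, sub_eq_zero, eq_comm (a := g)]

theorem cayley_adj_of_sub_eq {g h g' h' : G} (hadj : (cayley S).Adj g h)
    (hsub : h' - g' = h - g) : (cayley S).Adj g' h' := by
  rw [cayley_adj_iff] at hadj ⊢
  rwa [hsub]

theorem cayley_sub_mem_of_adj_s5 (hsym : ∀ s ∈ S, -s ∈ S) {g h : G} (hadj : (cayley S).Adj g h) :
    h - g ∈ S := by
  obtain ⟨-, hmem | hmem⟩ := cayley_adj_iff.mp hadj
  · exact hmem
  · simpa using hsym _ hmem

theorem IsConvexGeodesicLine.sub_add_two_eq {γ : ℤ → G}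
    (hγ : IsConvexGeodesicLine (cayley S) γ) (n : ℤ) :
    γ (n + 2) - γ (n + 1) = γ (n + 1) - γ n := by
  have h₀ := hγ.1.adj_succ n
  have h₁ : (cayley S).Adj (γ (n + 1)) (γ (n + 2)) := by
    simpa [add_assoc] using hγ.1.adj_succ (n + 1)
  have hswap := hγ.eq_of_adj_of_adj (y := γ n + (γ (n + 2) - γ (n + 1)))
    (cayley_adj_of_sub_eq h₁ (by abel)) (cayley_adj_of_sub_eq h₀ (by abel))
  exact eq_sub_of_add_eq' hswap

end Cayley

theorem eq_add_zsmul_of_sub_add_two_eq {G : Type*} [AddCommGroup G] {f : ℤ → G}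
    (hf : ∀ n, f (n + 2) - f (n + 1) = f (n + 1) - f n) (n : ℤ) :
    f n = f 0 + n • (f 1 - f 0) := by
  have hstep : ∀ m, f (m + 1) - f m = f 1 - f 0 := fun m => by
    have hper : Function.Periodic (fun m => f (m + 1) - f m) 1 := fun m => by
      simpa [add_assoc] using hf m
    simpa using hper.int_mul_eq m
  have hper : Function.Periodic (fun m : ℤ => f m - m • (f 1 - f 0)) 1 := fun m => by
    simp only [add_smul, one_smul, ← hstep m]
    abel
  have := hper.int_mul_eq n
  simp only [Int.cast_id, mul_one, zero_smul, sub_zero] at this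
  exact sub_eq_iff_eq_add.mp this

theorem convex_geodesic_line_algebraic_general {G : Type*} [AddCommGroup G] (S : Set G)
    (hsym : ∀ s ∈ S, -s ∈ S)
    (γ : ℤ → G) (hγ : IsConvexGeodesicLine (cayley S) γ) :
    ∃ s ∈ S, ∃ h : G, ∀ n : ℤ, γ n = h + n • s :=
  ⟨γ 1 - γ 0, cayley_sub_mem_of_adj_s5 hsym (by simpa using hγ.1.adj_succ 0), γ 0,
    eq_add_zsmul_of_sub_add_two_eq hγ.sub_add_two_eq⟩

/-- If `G` is an Abelian group and `S ⊆ G` is a finite symmetric generating set, then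
every convex geodesic line in `Cay(G,S)` is algebraic, i.e. of the form
`n ↦ h + n • s` for some `h ∈ G` and `s ∈ S`. -/
theorem convex_geodesic_line_algebraic {G : Type*} [AddCommGroup G] (S : Set G)
    (hfin : S.Finite) (hsym : ∀ s ∈ S, -s ∈ S) (hgen : AddSubgroup.closure S = ⊤)
    (γ : ℤ → G) (hγ : IsConvexGeodesicLine (cayley S) γ) :
    ∃ s ∈ S, ∃ h : G, ∀ n : ℤ, γ n = h + n • s :=
  convex_geodesic_line_algebraic_general S hsym γ hγ
end

section
/- Let G and G' be finitely generated Abelian groups, let S ⊆ G and S' ⊆ G' be symmetric finite generating sets, let s ∈ S, and let γ, η : ℤ → G be quasi-algebraic lines in Cay(G,S), both of quasi-type π_G(s). Suppose φ : Cay(G,S) → Cay(G',S') is a graph isomorphism such that γ' := φ ∘ γ and η' := φ ∘ η are quasi-algebraic lines in Cay(G',S'). Then γ' and η' have the same quasi-type. -/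
/-!
Since `γ` and `η` have the same quasi-type, `γ n - η n` stays in one coset of the finite group
`tors G`, so `d_S(γ n, η n)` is bounded. The isomorphism `φ` is an isometry, so
`d_{S'}(φ (γ n), φ (η n))` is bounded as well, and as `S'` is finite the differences
`φ (γ n) - φ (η n)` take only finitely many values. Their images in the torsion-free group
`G' / tors G'` are `a + n • (u - v)`, which are pairwise distinct unless `u = v`.
-/

open Pointwise

theorem Set.Finite.nsmul {A : Type*} [AddMonoid A] {T : Set A} (hT : T.Finite) :
    ∀ n : ℕ, (n • T).Finite
  | 0 => by simp
  | n + 1 => by rw [succ_nsmul]; exact (hT.nsmul n).add hT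

theorem AddCommGroup.finite_torsion (G : Type*) [AddCommGroup G] [AddGroup.FG G] :
    Finite (AddCommGroup.torsion G) := by
  have : Module.Finite ℤ G := Module.Finite.iff_addGroup_fg.mpr inferInstance
  have : AddGroup.FG (AddCommGroup.torsion G) := Module.Finite.iff_addGroup_fg.mp
    (inferInstanceAs (Module.Finite ℤ (AddSubgroup.toIntSubmodule (AddCommGroup.torsion G))))
  exact AddCommGroup.finite_of_fg_isAddTorsion _ fun x => AddSubmonoid.isOfFinAddOrder_coe.mp x.2

theorem QuotientAddGroup.finite_setOf_mk_eq {G : Type*} [AddCommGroup G] (H : AddSubgroup G)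
    [Finite H] (a : G) : {g | QuotientAddGroup.mk' H g = QuotientAddGroup.mk' H a}.Finite := by
  refine ((H : Set G).toFinite.image (a + ·)).subset fun g hg => ?_
  exact ⟨-a + g, QuotientAddGroup.eq.mp hg.symm, add_neg_cancel_left a g⟩

theorem eq_apply_zero_add_zsmul {A : Type*} [AddCommGroup A] {f : ℤ → A} {t : A}
    (hf : ∀ n, f (n + 1) - f n = t) (n : ℤ) : f n = f 0 + n • t := by
  induction n using Int.induction_on with
  | zero => simp
  | succ k ih => rw [sub_eq_iff_eq_add.mp (hf k), ih, add_smul, one_smul]; abel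
  | pred k ih =>
    have h := hf (-k - 1)
    rw [sub_add_cancel] at h
    rw [show f (-k - 1) = f (-k) - t by rw [← h]; abel, ih, sub_smul, one_smul]; abel

theorem SimpleGraph.edist_map_le {V W : Type*} {G : SimpleGraph V} {G' : SimpleGraph W}
    (f : G →g G') (u v : V) : G'.edist (f u) (f v) ≤ G.edist u v := by
  by_cases h : G.Reachable u v
  · obtain ⟨p, hp⟩ := h.exists_walk_length_eq_edist
    rw [← hp, ← p.length_map f]
    exact SimpleGraph.edist_le _
  · rw [SimpleGraph.edist_eq_top_of_not_reachable h]
    exact le_top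

section Cayley

variable {G : Type*} [AddCommGroup G] {S : Set G}

theorem sub_mem_of_cayley_adj {x y : G} (h : (cayley S).Adj x y) : y - x ∈ S ∪ -S := by
  rcases h.2 with h | h
  · exact .inl h
  · exact .inr (by simpa using h)

theorem cayley_edist_add_le_one {s : G} (hs : s ∈ S) (x : G) :
    (cayley S).edist x (x + s) ≤ 1 := by
  rw [SimpleGraph.edist_le_one_iff_adj_or_eq]
  by_cases h0 : s = 0
  · simp [h0]
  · exact .inl ⟨by simpa using h0, .inl (by simpa using hs)⟩

theorem exists_cayley_edist_add_le (hS : AddSubgroup.closure S = ⊤) (d : G) :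
    ∃ k : ℕ, ∀ x, (cayley S).edist x (x + d) ≤ k := by
  have hd : d ∈ AddSubgroup.closure S := hS ▸ AddSubgroup.mem_top d
  induction hd using AddSubgroup.closure_induction with
  | mem s hs => exact ⟨1, fun x => by exact_mod_cast cayley_edist_add_le_one hs x⟩
  | zero => exact ⟨0, fun x => by simp⟩
  | add a b _ _ iha ihb =>
    obtain ⟨k, hk⟩ := iha
    obtain ⟨l, hl⟩ := ihb
    refine ⟨k + l, fun x => ?_⟩
    calc (cayley S).edist x (x + (a + b))
        ≤ (cayley S).edist x (x + a) + (cayley S).edist (x + a) (x + a + b) := by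
          rw [← add_assoc]; exact SimpleGraph.edist_triangle
      _ ≤ k + l := by exact_mod_cast add_le_add (hk x) (hl (x + a))
  | neg a _ ih =>
    obtain ⟨k, hk⟩ := ih
    refine ⟨k, fun x => ?_⟩
    simpa [SimpleGraph.edist_comm] using hk (x + -a)

theorem exists_cayley_edist_le_of_sub_mem (hS : AddSubgroup.closure S = ⊤) {D : Set G}
    (hD : D.Finite) : ∃ k : ℕ, ∀ x y, y - x ∈ D → (cayley S).edist x y ≤ k := by
  choose k hk using exists_cayley_edist_add_le hS
  refine ⟨hD.toFinset.sup k, fun x y hxy => ?_⟩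
  calc (cayley S).edist x y = (cayley S).edist x (x + (y - x)) := by rw [add_sub_cancel]
    _ ≤ k (y - x) := hk (y - x) x
    _ ≤ hD.toFinset.sup k := by exact_mod_cast Finset.le_sup (hD.mem_toFinset.mpr hxy)

theorem sub_mem_nsmul_of_cayley_walk {x y : G} (p : (cayley S).Walk x y) :
    y - x ∈ p.length • (S ∪ -S) := by
  induction p with
  | nil => simp
  | cons hadj p ih =>
    rw [SimpleGraph.Walk.length_cons, succ_nsmul, ← sub_add_sub_cancel]
    exact Set.add_mem_add ih (sub_mem_of_cayley_adj hadj)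

theorem sub_mem_nsmul_of_cayley_edist_le {x y : G} {n : ℕ} (h : (cayley S).edist x y ≤ n) :
    y - x ∈ n • insert 0 (S ∪ -S) := by
  obtain ⟨p, hp⟩ := (SimpleGraph.reachable_of_edist_ne_top
    (ne_top_of_le_ne_top (ENat.natCast_ne_top n) h)).exists_walk_length_eq_edist
  refine Set.nsmul_subset_nsmul (Set.subset_insert _ _) (Set.mem_insert _ _) ?_
    (sub_mem_nsmul_of_cayley_walk p)
  exact_mod_cast hp.le.trans h

end Cayley

namespace IsQuasiAlgebraicLine

variable {G : Type*} [AddCommGroup G] {S : Set G} {t t' : G ⧸ AddCommGroup.torsion G}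
  {γ η : ℤ → G}

theorem mk_apply (hγ : IsQuasiAlgebraicLine S t γ) (n : ℤ) :
    QuotientAddGroup.mk' _ (γ n) = QuotientAddGroup.mk' _ (γ 0) + n • t :=
  eq_apply_zero_add_zsmul (f := fun n => QuotientAddGroup.mk' _ (γ n))
    (fun n => by simpa only [map_sub] using hγ.2 n) n

theorem mk_sub_apply (hγ : IsQuasiAlgebraicLine S t γ) (hη : IsQuasiAlgebraicLine S t' η)
    (n : ℤ) : QuotientAddGroup.mk' _ (γ n - η n)
      = QuotientAddGroup.mk' _ (γ 0 - η 0) + n • (t - t') := by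
  rw [map_sub, map_sub, hγ.mk_apply n, hη.mk_apply n, smul_sub]
  abel

end IsQuasiAlgebraicLine

theorem parallel_lines_same_quasiType_general {G G' : Type*} [AddCommGroup G] [AddCommGroup G']
    [AddGroup.FG G] (S : Set G) (S' : Set G')
    (hSgen : AddSubgroup.closure S = ⊤)
    (hS'fin : S'.Finite)
    (s : G) (γ η : ℤ → G)
    (hγ : IsQuasiAlgebraicLine S (QuotientAddGroup.mk' (AddCommGroup.torsion G) s) γ)
    (hη : IsQuasiAlgebraicLine S (QuotientAddGroup.mk' (AddCommGroup.torsion G) s) η)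
    (φ : cayley S ≃g cayley S')
    (u v : G' ⧸ AddCommGroup.torsion G')
    (hγ' : IsQuasiAlgebraicLine S' u (fun n => φ (γ n)))
    (hη' : IsQuasiAlgebraicLine S' v (fun n => φ (η n))) :
    u = v := by
  have : Finite (AddCommGroup.torsion G) := AddCommGroup.finite_torsion G
  obtain ⟨c, hc⟩ := exists_cayley_edist_le_of_sub_mem hSgen
    (QuotientAddGroup.finite_setOf_mk_eq (AddCommGroup.torsion G) (γ 0 - η 0))
  have hbounded (n : ℤ) : φ (γ n) - φ (η n) ∈ c • insert 0 (S' ∪ -S') := by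
    refine sub_mem_nsmul_of_cayley_edist_le ((SimpleGraph.edist_map_le φ.toHom _ _).trans ?_)
    refine hc _ _ ?_
    rw [Set.mem_ofPred_eq, hγ.mk_sub_apply hη n, sub_self, smul_zero, add_zero]
  by_contra huv
  have hinj : Function.Injective fun n => φ (γ n) - φ (η n) :=
    fun m n (hmn : φ (γ m) - φ (η m) = φ (γ n) - φ (η n)) => by
      have h := congrArg (QuotientAddGroup.mk' (AddCommGroup.torsion G')) hmn
      rw [hγ'.mk_sub_apply hη' m, hγ'.mk_sub_apply hη' n] at h
      exact smul_left_injective ℤ (sub_ne_zero.mpr huv) (add_left_cancel h)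
  have hfinite : (c • insert 0 (S' ∪ -S')).Finite :=
    ((hS'fin.union hS'fin.neg).insert 0).nsmul c
  exact Set.infinite_range_of_injective hinj (hfinite.subset (Set.range_subset_iff.mpr hbounded))

/-- **Parallel lines and quasi-type.** If `γ, η` are quasi-algebraic lines in `Cay(G,S)`
of the same quasi-type `π_G s`, and a graph isomorphism `φ : Cay(G,S) → Cay(G',S')`
maps them to quasi-algebraic lines `φ ∘ γ` and `φ ∘ η` in `Cay(G',S')`, then `φ ∘ γ`
and `φ ∘ η` have the same quasi-type. -/
theorem parallel_lines_same_quasiType {G G' : Type*} [AddCommGroup G] [AddCommGroup G']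
    [AddGroup.FG G] [AddGroup.FG G'] (S : Set G) (S' : Set G')
    (hSfin : S.Finite) (hSsym : ∀ t ∈ S, -t ∈ S) (hSgen : AddSubgroup.closure S = ⊤)
    (hS'fin : S'.Finite) (hS'sym : ∀ t ∈ S', -t ∈ S')
    (hS'gen : AddSubgroup.closure S' = ⊤)
    (s : G) (hs : s ∈ S) (γ η : ℤ → G)
    (hγ : IsQuasiAlgebraicLine S (QuotientAddGroup.mk' (AddCommGroup.torsion G) s) γ)
    (hη : IsQuasiAlgebraicLine S (QuotientAddGroup.mk' (AddCommGroup.torsion G) s) η)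
    (φ : cayley S ≃g cayley S')
    (u v : G' ⧸ AddCommGroup.torsion G')
    (hγ' : IsQuasiAlgebraicLine S' u (fun n => φ (γ n)))
    (hη' : IsQuasiAlgebraicLine S' v (fun n => φ (η n))) :
    u = v :=
  parallel_lines_same_quasiType_general S S' hSgen hS'fin s γ η hγ hη φ u v hγ' hη'
end

section
/- For every n ∈ ℤ, the flip at position n, i.e., the map ℤ × ℤ/2 → ℤ × ℤ/2 sending (x,y) to (x,y) if x ≠ n and to (x, 1−y) if x = n, is a graph automorphism of Cay(ℤ × ℤ/2, {±(1,0), ±(1,1)}), and it is not induced by an affine isomorphism of ℤ × ℤ/2. -/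
/-- The flip at position `n` in `ℤ × ℤ/2`. -/
def flipAt (n : ℤ) : ℤ × ZMod 2 → ℤ × ZMod 2 :=
  fun p => if p.1 = n then (p.1, 1 - p.2) else p

/-! The Cayley graph in question is the preimage of the path graph on `ℤ` under the first
projection, so adjacency only sees first coordinates, which the flip preserves. An affine map
`f = ψ + b` has translation-invariant increments `f (p + v) - f p = ψ v`, whereas the flip
changes the increment along `(1, 0)` from `(1, 1)` at `(n, 0)` to `(1, 0)` at `(n + 1, 0)`. -/

section CayleyPreimage

variable {G H : Type*} [AddCommGroup G] [AddCommGroup H] (φ : G →+ H) {T : Set H}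

lemma cayley_preimage_adj_iff (hT : (0 : H) ∉ T) (a b : G) :
    (cayley (φ ⁻¹' T)).Adj a b ↔ φ b - φ a ∈ T ∨ φ a - φ b ∈ T := by
  simp only [cayley, Set.mem_preimage, map_sub]
  refine ⟨And.right, fun h => ⟨?_, h⟩⟩
  rintro rfl
  simp only [sub_self, or_self] at h
  exact hT h

lemma cayley_preimage_adj_apply_iff (hT : (0 : H) ∉ T) {f : G → G} (hf : ∀ p, φ (f p) = φ p)
    (a b : G) : (cayley (φ ⁻¹' T)).Adj (f a) (f b) ↔ (cayley (φ ⁻¹' T)).Adj a b := by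
  simp only [cayley_preimage_adj_iff φ hT, hf]

end CayleyPreimage

lemma apply_add_sub_apply_eq_of_forall_eq_map_add {G H F : Type*} [AddCommGroup G]
    [AddCommGroup H] [FunLike F G H] [AddMonoidHomClass F G H] {f : G → H} {ψ : F} {b : H}
    (hf : ∀ p, f p = ψ p + b) (p q v : G) : f (p + v) - f p = f (q + v) - f q := by
  simp only [hf, map_add]
  abel

lemma flipAt_involutive (n : ℤ) : Function.Involutive (flipAt n) := by
  rintro ⟨x, y⟩
  by_cases h : x = n <;> simp [flipAt, h]

lemma fst_flipAt (n : ℤ) (p : ℤ × ZMod 2) : (flipAt n p).1 = p.1 := by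
  unfold flipAt
  split_ifs <;> rfl

lemma pm_one_zero_pm_one_one_eq_preimage_fst :
    ({(1, 0), -(1, 0), (1, 1), -(1, 1)} : Set (ℤ × ZMod 2)) =
      AddMonoidHom.fst ℤ (ZMod 2) ⁻¹' {1, -1} := by
  ext ⟨x, y⟩
  obtain rfl | rfl : y = 0 ∨ y = 1 := by revert y; decide
  all_goals simp [Prod.ext_iff]

/-- For every `n ∈ ℤ`, the flip at position `n` is a graph automorphism of
`Cay(ℤ × ℤ/2, {±(1,0), ±(1,1)})`, but it is not induced by an affine isomorphism of
`ℤ × ℤ/2` (a group automorphism composed with a translation). -/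
theorem flip_automorphism_not_affine (n : ℤ) :
    (Function.Bijective (flipAt n) ∧
      ∀ p q : ℤ × ZMod 2,
        (cayley ({(1, 0), -(1, 0), (1, 1), -(1, 1)} : Set (ℤ × ZMod 2))).Adj
            (flipAt n p) (flipAt n q) ↔
          (cayley ({(1, 0), -(1, 0), (1, 1), -(1, 1)} : Set (ℤ × ZMod 2))).Adj p q) ∧
      ¬∃ (ψ : (ℤ × ZMod 2) ≃+ (ℤ × ZMod 2)) (b : ℤ × ZMod 2),
          ∀ p, flipAt n p = ψ p + b := by
  refine ⟨⟨(flipAt_involutive n).bijective, fun p q => ?_⟩, ?_⟩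
  · rw [pm_one_zero_pm_one_one_eq_preimage_fst]
    exact cayley_preimage_adj_apply_iff _ (by decide) (fst_flipAt n) p q
  · rintro ⟨ψ, b, hψ⟩
    have hinc := apply_add_sub_apply_eq_of_forall_eq_map_add hψ (n, 0) (n + 1, 0) (1, 0)
    have hsnd := congrArg Prod.snd hinc
    simp [flipAt, add_assoc] at hsnd
end

section
/- Let G be a finitely generated Abelian group, let S ⊆ G be a finite generating set, and let r ∈ ℕ with r > diam_{d_S}(tors G). Then β(r) ≡ |tors G| (mod 2), where β(r) denotes the number of elements of the d_S-ball of radius r around 0 in G. -/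
/-!
Negation is an isometry of `Cay(G,S)` fixing `0`, so it preserves the ball; it also preserves
`tors G`, which lies in the ball because `r` exceeds its diameter. An element with `-g = g` has
`2 • g = 0` and is torsion, so negation pairs off the elements of the ball outside `tors G`.
The ball is finite because `Cay(G,S)` is connected and locally finite.
-/

namespace SimpleGraph

variable {V V' : Type*} {G : SimpleGraph V} {G' : SimpleGraph V'}

theorem edist_map_le_s16 (f : G →g G') (u v : V) : G'.edist (f u) (f v) ≤ G.edist u v := by
  by_cases h : G.Reachable u v
  · obtain ⟨w, hw⟩ := h.exists_walk_length_eq_edist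
    simpa [hw] using edist_le (w.map f)
  · simp [edist_eq_top_of_not_reachable h]

theorem Iso.edist_eq (φ : G ≃g G') (u v : V) : G'.edist (φ u) (φ v) = G.edist u v :=
  le_antisymm (edist_map_le_s16 φ.toHom u v) (by simpa using edist_map_le_s16 φ.symm.toHom (φ u) (φ v))

theorem Iso.dist_eq (φ : G ≃g G') (u v : V) : G'.dist (φ u) (φ v) = G.dist u v :=
  congrArg ENat.toNat (φ.edist_eq u v)

theorem exists_adj_edist_le_of_edist_le_succ {c v : V} {r : ℕ} (hv : G.edist c v ≤ r + 1) :
    G.edist c v ≤ r ∨ ∃ u, G.edist c u ≤ r ∧ G.Adj u v := by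
  have hreach : G.Reachable v c :=
    (reachable_of_edist_ne_top (ne_top_of_le_ne_top (by simp) hv)).symm
  obtain ⟨w, hw⟩ := hreach.exists_walk_length_eq_edist
  cases w with
  | nil => simp
  | cons hadj w =>
    rw [edist_comm, ← hw, Walk.length_cons, Nat.cast_add_one] at hv
    have hlen : w.length ≤ r := Nat.le_of_add_le_add_right (by exact_mod_cast hv)
    exact Or.inr ⟨_, edist_comm ▸ (edist_le w).trans (by exact_mod_cast hlen), hadj.symm⟩

theorem finite_setOf_edist_le (hG : ∀ v, (G.neighborSet v).Finite) (c : V) (r : ℕ) :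
    {v | G.edist c v ≤ r}.Finite := by
  induction r with
  | zero => simp
  | succ r ih =>
    refine (ih.union (ih.biUnion fun u _ => hG u)).subset fun v hv => ?_
    simpa using exists_adj_edist_le_of_edist_le_succ (G := G) (by exact_mod_cast hv)

end SimpleGraph

namespace cayley

variable {G : Type*} [AddCommGroup G] {S : Set G}

variable (S) in
def addLeft (a : G) : cayley S ≃g cayley S where
  toEquiv := Equiv.addLeft a
  map_rel_iff' := by simp [cayley]

@[simp]
theorem addLeft_apply (a g : G) : addLeft S a g = a + g := rfl

theorem dist_zero_neg (g : G) : (cayley S).dist 0 (-g) = (cayley S).dist 0 g := by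
  simpa [SimpleGraph.dist_comm] using ((addLeft S g).dist_eq (-g) 0).symm

theorem preconnected (hgen : AddSubgroup.closure S = ⊤) : (cayley S).Preconnected := by
  suffices h : ∀ g, (cayley S).Reachable 0 g from fun u v => (h u).symm.trans (h v)
  intro g
  induction (hgen ▸ AddSubgroup.mem_top g : g ∈ AddSubgroup.closure S) using
    AddSubgroup.closure_induction with
  | mem s hs =>
    by_cases hs0 : s = 0
    · rw [hs0]
    · exact SimpleGraph.Adj.reachable ⟨Ne.symm hs0, Or.inl (by simpa)⟩
  | zero => rfl
  | add x y _ _ hx hy => exact hx.trans (by simpa using hy.map (addLeft S x).toHom)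
  | neg x _ hx => simpa using (hx.map (addLeft S (-x)).toHom).symm

theorem neighborSet_finite (hfin : S.Finite) (g : G) : ((cayley S).neighborSet g).Finite := by
  refine ((hfin.union hfin.neg).image (g + ·)).subset fun h hh => ?_
  obtain ⟨-, hS | hS⟩ := hh
  · exact ⟨h - g, Or.inl hS, add_sub_cancel g h⟩
  · exact ⟨h - g, Or.inr (by simpa using hS), add_sub_cancel g h⟩

theorem finite_setOf_dist_le (hfin : S.Finite) (hgen : AddSubgroup.closure S = ⊤) (r : ℕ) :
    {g : G | (cayley S).dist 0 g ≤ r}.Finite := by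
  convert SimpleGraph.finite_setOf_edist_le (neighborSet_finite hfin) 0 r using 3 with g
  rw [← (preconnected hgen 0 g).coe_dist_eq_edist, Nat.cast_le]

end cayley

theorem Finset.even_card_of_involutive {α : Type*} {f : α → α} (hf : Function.Involutive f)
    {s : Finset α} (hs : ∀ a ∈ s, f a ∈ s) (hfix : ∀ a ∈ s, f a ≠ a) : Even s.card := by
  rw [← ZMod.natCast_eq_zero_iff_even, Finset.card_eq_sum_ones, Nat.cast_sum, Nat.cast_one]
  exact Finset.sum_involution (fun a _ => f a) (fun _ _ => by decide) (fun a ha _ => hfix a ha) hs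
    (fun a _ => hf a)

theorem Set.ncard_modEq_two_of_involutive {α : Type*} {f : α → α} (hf : Function.Involutive f)
    {s t : Set α} (hs : s.Finite) (hts : t ⊆ s) (hsf : Set.MapsTo f s s) (htf : Set.MapsTo f t t)
    (hfix : ∀ a ∈ s, f a = a → a ∈ t) : s.ncard ≡ t.ncard [MOD 2] := by
  have hdiff : Even (s \ t).ncard := by
    rw [Set.ncard_eq_toFinset_card _ hs.sdiff]
    refine Finset.even_card_of_involutive hf (fun a ha => ?_) (fun a ha hfa => ?_) <;>
      rw [Set.Finite.mem_toFinset] at ha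
    · exact (Set.Finite.mem_toFinset _).2
        ⟨hsf ha.1, fun hft => ha.2 (hf a ▸ htf hft)⟩
    · exact ha.2 (hfix a ha.1 hfa)
  obtain ⟨k, hk⟩ := hdiff
  rw [← Set.ncard_sdiff_add_ncard_of_subset hts hs, hk]
  unfold Nat.ModEq
  omega

theorem AddCommGroup.mem_torsion_of_neg_eq_self {G : Type*} [AddCommGroup G] {g : G}
    (hg : -g = g) : g ∈ AddCommGroup.torsion G :=
  isOfFinAddOrder_iff_nsmul_eq_zero.2
    ⟨2, two_pos, by rw [two_nsmul, ← neg_eq_iff_add_eq_zero, hg]⟩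

theorem ball_card_parity_general {G : Type*} [AddCommGroup G] (S : Set G)
    (hfin : S.Finite) (hgen : AddSubgroup.closure S = ⊤) (r : ℕ)
    (hr : ∀ x ∈ AddCommGroup.torsion G, ∀ y ∈ AddCommGroup.torsion G,
      (cayley S).dist x y < r) :
    Nat.card {g : G | (cayley S).dist 0 g ≤ r} % 2 =
      Nat.card (AddCommGroup.torsion G) % 2 := by
  have htors : (AddCommGroup.torsion G : Set G) ⊆ {g | (cayley S).dist 0 g ≤ r} :=
    fun x hx => (hr 0 (zero_mem _) x hx).le
  rw [Nat.card_coe_set_eq, ← SetLike.coe_sort_coe, Nat.card_coe_set_eq]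
  exact Set.ncard_modEq_two_of_involutive neg_involutive (cayley.finite_setOf_dist_le hfin hgen r)
    htors (fun g hg => by simpa [cayley.dist_zero_neg] using hg) (fun g hg => neg_mem hg)
    (fun _ _ => AddCommGroup.mem_torsion_of_neg_eq_self)

/-- **Parity of the torsion part via size of balls.** If `G` is a finitely generated
Abelian group with finite generating set `S` and `r ∈ ℕ` exceeds the `d_S`-diameter of
`tors G`, then the number of elements of the `d_S`-ball of radius `r` around `0` is
congruent to `|tors G|` modulo 2. -/
theorem ball_card_parity {G : Type*} [AddCommGroup G] [AddGroup.FG G] (S : Set G)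
    (hfin : S.Finite) (hgen : AddSubgroup.closure S = ⊤) (r : ℕ)
    (hr : ∀ x ∈ AddCommGroup.torsion G, ∀ y ∈ AddCommGroup.torsion G,
      (cayley S).dist x y < r) :
    Nat.card {g : G | (cayley S).dist 0 g ≤ r} % 2 =
      Nat.card (AddCommGroup.torsion G) % 2 :=
  ball_card_parity_general S hfin hgen r hr
end

section
/- In the Cayley graph Cay(ℤ², {±(1,0), ±(0,1)}), the line γ : ℤ → ℤ² given by γ(n) = (n, 0) for n ≤ 0 and γ(n) = (n−1, 1) for n ≥ 1 is a quasi-convex geodesic line that is neither a convex geodesic line nor quasi-algebraic. -/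
/-! The stair line stays within distance `2` of the horizontal line `n ↦ (n, 0)`, and
quasi-convexity passes to geodesic lines at bounded distance from a quasi-convex one (triangle
inequality). The horizontal line is quasi-convex because the graph metric of the square lattice
is the `ℓ¹` metric, whose geodesics are monotone in each coordinate: a geodesic between points
`c`-close to the line keeps its second coordinate in `[-c, c]`, so its first coordinate advances
at unit speed up to an error `O(c)`. Convexity fails at the corner, where `(0,0), (1,0), (1,1)` is
a second geodesic from `(0,0)` to `(1,1)`, and the steps `(1,0)` and `(0,1)` of the line differ. -/

open SimpleGraph

section

variable {V : Type*} {G : SimpleGraph V}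

lemma SimpleGraph.exists_walk_length_eq_of_forall_adj {p : ℕ → V} (i : ℕ) :
    ∀ k, (∀ l < k, G.Adj (p (i + l)) (p (i + l + 1))) →
      ∃ w : G.Walk (p i) (p (i + k)), w.length = k
  | 0, _ => ⟨.nil, rfl⟩
  | k + 1, hadj => by
    obtain ⟨w, hw⟩ := exists_walk_length_eq_of_forall_adj i k fun l hl => hadj l (by omega)
    exact ⟨w.concat (hadj k (by omega)), by simp [hw]⟩

lemma IsGeodesicSegment.dist_le {D : ℕ} {p : ℕ → V}
    (hp : IsGeodesicSegment G D p) {i j : ℕ} (hij : i ≤ j) (hj : j ≤ D) :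
    G.dist (p i) (p j) ≤ j - i := by
  obtain ⟨k, rfl⟩ := Nat.exists_eq_add_of_le hij
  obtain ⟨w, hw⟩ := exists_walk_length_eq_of_forall_adj (p := p) i k
    fun l hl => hp.1 (i + l) (by omega)
  simpa [← hw] using SimpleGraph.dist_le w

lemma IsGeodesicSegment.dist_eq {D : ℕ} {p : ℕ → V}
    (hG : G.Connected) (hp : IsGeodesicSegment G D p) {j : ℕ} (hj : j ≤ D) :
    G.dist (p 0) (p j) = j ∧ G.dist (p j) (p D) = D - j := by
  have h₁ := hp.dist_le (Nat.zero_le j) hj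
  have h₂ := hp.dist_le hj le_rfl
  have := hG.dist_triangle (u := p 0) (v := p j) (w := p D)
  have := hp.2
  omega

theorem IsQuasiConvexGeodesicLine.of_dist_le {σ γ : ℤ → V}
    (hG : G.Connected) (hσ : IsQuasiConvexGeodesicLine G σ) (hγ : IsGeodesicLine G γ) {b : ℕ}
    (hb : ∀ n, G.dist (γ n) (σ n) ≤ b) : IsQuasiConvexGeodesicLine G γ := by
  refine ⟨hγ, fun c => ?_⟩
  obtain ⟨C, hC⟩ := hσ.2 (c + b)
  refine ⟨C + b, fun n m hnm x y hx hy p hp hp0 hpD j hj => ?_⟩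
  have hx' : G.dist x (σ n) ≤ c + b := hG.dist_triangle.trans (add_le_add hx (hb n))
  have hy' : G.dist y (σ m) ≤ c + b := hG.dist_triangle.trans (add_le_add hy (hb m))
  calc G.dist (p j) (γ (n + j))
      ≤ G.dist (p j) (σ (n + j)) + G.dist (σ (n + j)) (γ (n + j)) := hG.dist_triangle
    _ ≤ C + b := by
      rw [SimpleGraph.dist_comm (u := σ _)]
      exact add_le_add (hC n m hnm x y hx' hy' p hp hp0 hpD j hj) (hb _)

end

abbrev squareLattice : SimpleGraph (ℤ × ℤ) := cayley {(1, 0), (-1, 0), (0, 1), (0, -1)}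

def l1Dist (x y : ℤ × ℤ) : ℕ := (x.1 - y.1).natAbs + (x.2 - y.2).natAbs

lemma squareLattice_adj_iff {x y : ℤ × ℤ} : squareLattice.Adj x y ↔ l1Dist x y = 1 := by
  simp only [cayley, l1Dist, Set.mem_insert_iff, Set.mem_singleton_iff, Prod.ext_iff,
    Prod.fst_sub, Prod.snd_sub, ne_eq]
  omega

lemma l1Dist_le_length {x y : ℤ × ℤ} (w : squareLattice.Walk x y) : l1Dist x y ≤ w.length := by
  induction w with
  | nil => simp [l1Dist]
  | cons hadj _ ih =>
    have := squareLattice_adj_iff.mp hadj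
    simp only [l1Dist, Walk.length_cons] at *
    omega

def stepToward (x y : ℤ × ℤ) : ℤ × ℤ :=
  if x.1 < y.1 then (x.1 + 1, x.2) else if y.1 < x.1 then (x.1 - 1, x.2)
  else if x.2 < y.2 then (x.1, x.2 + 1) else (x.1, x.2 - 1)

lemma exists_walk_length_eq_l1Dist :
    ∀ (N : ℕ) (x y : ℤ × ℤ), l1Dist x y = N → ∃ w : squareLattice.Walk x y, w.length = N
  | 0, x, y, h => by
    simp only [l1Dist] at h
    obtain rfl : x = y := Prod.ext (by omega) (by omega)
    exact ⟨.nil, rfl⟩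
  | N + 1, x, y, h => by
    have hadj : squareLattice.Adj x (stepToward x y) := by
      rw [squareLattice_adj_iff]; unfold stepToward l1Dist at *; split_ifs <;> simp
    obtain ⟨w, hw⟩ := exists_walk_length_eq_l1Dist N (stepToward x y) y
      (by unfold stepToward l1Dist at *; split_ifs <;> simp <;> omega)
    exact ⟨.cons hadj w, by simp [hw]⟩

lemma squareLattice_dist (x y : ℤ × ℤ) : squareLattice.dist x y = l1Dist x y := by
  obtain ⟨w, hw⟩ := exists_walk_length_eq_l1Dist _ x y rfl
  obtain ⟨p, hp⟩ := Reachable.exists_walk_length_eq_dist ⟨w⟩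
  exact le_antisymm (hw ▸ dist_le w) (hp ▸ l1Dist_le_length p)

lemma squareLattice_connected : squareLattice.Connected :=
  (connected_iff_exists_forall_reachable _).2
    ⟨0, fun y => ⟨(exists_walk_length_eq_l1Dist _ 0 y rfl).choose⟩⟩

lemma mem_uIcc_of_l1Dist_add_l1Dist_eq {x y a : ℤ × ℤ}
    (h : l1Dist x a + l1Dist a y = l1Dist x y) :
    a.1 ∈ Set.uIcc x.1 y.1 ∧ a.2 ∈ Set.uIcc x.2 y.2 := by
  simp only [l1Dist, Set.mem_uIcc] at *
  omega

lemma l1Dist_horizontal_le_of_between {x y a : ℤ × ℤ} {n m : ℤ} {c j : ℕ} (hnm : n ≤ m)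
    (hx : l1Dist x (n, 0) ≤ c) (hy : l1Dist y (m, 0) ≤ c) (hxa : l1Dist x a = j)
    (ha : l1Dist x a + l1Dist a y = l1Dist x y) :
    l1Dist a (n + j, 0) ≤ 3 * c := by
  have hbetween := mem_uIcc_of_l1Dist_add_l1Dist_eq ha
  simp only [l1Dist, Set.mem_uIcc] at hx hy hxa hbetween ⊢
  omega

lemma isQuasiConvexGeodesicLine_squareLattice_horizontal :
    IsQuasiConvexGeodesicLine squareLattice fun n => (n, 0) := by
  refine ⟨fun j k => by simp [squareLattice_dist, l1Dist], fun c => ⟨3 * c, ?_⟩⟩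
  intro n m hnm x y hx hy p hp hp0 hpD j hj
  obtain ⟨hxa, hay⟩ := hp.dist_eq squareLattice_connected hj
  rw [hp0] at hxa
  rw [hpD] at hay
  simp only [squareLattice_dist] at hx hy hxa hay hj ⊢
  exact l1Dist_horizontal_le_of_between hnm hx hy hxa (by omega)

def stairLine : ℤ → ℤ × ℤ := fun n => if n ≤ 0 then (n, 0) else (n - 1, 1)

lemma isGeodesicLine_stairLine : IsGeodesicLine squareLattice stairLine := by
  intro j k
  simp only [squareLattice_dist, l1Dist, stairLine]
  split_ifs <;> simp <;> omega

lemma dist_stairLine_horizontal_le_two (n : ℤ) : squareLattice.dist (stairLine n) (n, 0) ≤ 2 := by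
  simp only [squareLattice_dist, l1Dist, stairLine]
  split_ifs <;> simp

lemma isQuasiConvexGeodesicLine_stairLine : IsQuasiConvexGeodesicLine squareLattice stairLine :=
  isQuasiConvexGeodesicLine_squareLattice_horizontal.of_dist_le squareLattice_connected
    isGeodesicLine_stairLine dist_stairLine_horizontal_le_two

lemma not_isConvexGeodesicLine_stairLine : ¬ IsConvexGeodesicLine squareLattice stairLine := by
  rintro ⟨-, hconvex⟩
  let p : ℕ → ℤ × ℤ := fun j => if j = 0 then (0, 0) else if j = 1 then (1, 0) else (1, 1)
  have hp : IsGeodesicSegment squareLattice 2 p := by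
    refine ⟨fun i hi => ?_, by simp [p, squareLattice_dist, l1Dist]⟩
    interval_cases i <;> simp [p, squareLattice_adj_iff, l1Dist]
  have := hconvex 0 2 (by norm_num) 2 p hp (by simp [p, stairLine]) (by simp [p, stairLine]) 1
    (by norm_num)
  simp [p, stairLine] at this

/-- In the integer square lattice `Cay(ℤ², {±(1,0), ±(0,1)})`, the line
`…, (-1,0), (0,0), (0,1), (1,1), …` is a quasi-convex geodesic line that is neither a
convex geodesic line nor quasi-algebraic (in the torsion-free group `ℤ²`,
quasi-algebraic means that all steps are equal). -/
theorem quasiConvex_not_convex_not_quasiAlgebraic :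
    IsQuasiConvexGeodesicLine
        (cayley ({(1, 0), (-1, 0), (0, 1), (0, -1)} : Set (ℤ × ℤ)))
        (fun n : ℤ => if n ≤ 0 then ((n, 0) : ℤ × ℤ) else (n - 1, 1)) ∧
      ¬ IsConvexGeodesicLine
        (cayley ({(1, 0), (-1, 0), (0, 1), (0, -1)} : Set (ℤ × ℤ)))
        (fun n : ℤ => if n ≤ 0 then ((n, 0) : ℤ × ℤ) else (n - 1, 1)) ∧
      ¬ ∀ n m : ℤ,
          ((fun n : ℤ => if n ≤ 0 then ((n, 0) : ℤ × ℤ) else (n - 1, 1)) (n + 1) -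
              (fun n : ℤ => if n ≤ 0 then ((n, 0) : ℤ × ℤ) else (n - 1, 1)) n) =
            ((fun n : ℤ => if n ≤ 0 then ((n, 0) : ℤ × ℤ) else (n - 1, 1)) (m + 1) -
              (fun n : ℤ => if n ≤ 0 then ((n, 0) : ℤ × ℤ) else (n - 1, 1)) m) := by
  refine ⟨isQuasiConvexGeodesicLine_stairLine, not_isConvexGeodesicLine_stairLine,
    fun hsteps => ?_⟩
  simpa using hsteps 0 (-1)
end
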